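/- If a₋ ∈ V is a − symbol, c₊ ∈ V is a + symbol, and b ∈ V is arbitrary, then T(a₋ ⋆ b ⋆ c₊) = T(a₋)T(b)T(c₊) as operators on ℓ²(ℕ); in particular T(a₋ ⋆ b) = T(a₋)T(b) and T(b ⋆ c₊) = T(b)T(c₊). -/

import Mathlib

open Filter MeasureTheory

noncomputable section

/-- A symbol `a`, where `a k` is the circle function `a_{k/2}` at half-integer `x = k/2`. -/
abbrev Symb := ℤ → ℂ → ℂ

/-- `m`-th Fourier coefficient of a function on the unit circle. -/
def fCoef (f : ℂ → ℂ) (m : ℤ) : ℂ :=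
  (2 * (Real.pi : ℂ))⁻¹ * ∫ p in (-Real.pi)..Real.pi,
    f (Complex.exp (Complex.I * (p : ℂ))) * Complex.exp (-(Complex.I * (m : ℂ) * (p : ℂ)))

/-- Matrix element `L_{j,k}(a) = (a_{(j+k)/2})_{j-k}` of the star-Laurent operator. -/
def Lmat (a : Symb) (j k : ℤ) : ℂ := fCoef (a (j + k)) (j - k)

/-- The annulus `ρ < |z| < ρ⁻¹`. -/
def annulus (ρ : ℝ) : Set ℂ := {z : ℂ | ρ < ‖z‖ ∧ ‖z‖ < ρ⁻¹}

/-- Membership in `V_ρ`: analytic extension to the annulus, uniformly bounded in `x`. -/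
def memVrho (ρ : ℝ) (a : Symb) : Prop :=
  (∀ k : ℤ, AnalyticOnNhd ℂ (a k) (annulus ρ)) ∧
    ∃ M : ℝ, ∀ (k : ℤ), ∀ z ∈ annulus ρ, ‖a k z‖ ≤ M

/-- Membership in `V = ⋃_{ρ ∈ (0,1)} V_ρ`. -/
def memV (a : Symb) : Prop := ∃ ρ : ℝ, ρ ∈ Set.Ioo (0 : ℝ) 1 ∧ memVrho ρ a

/-- The Moyal star product of two symbols. -/
def starProd (a b : Symb) : Symb := fun x z =>
  ∑' mn : ℤ × ℤ, z ^ (mn.1 + mn.2) * fCoef (a (x + mn.1)) mn.2 * fCoef (b (x - mn.2)) mn.1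

/-- Two symbols are equivalent if they generate the same star-Laurent matrix. -/
def symbolEquiv (a b : Symb) : Prop := ∀ j k : ℤ, Lmat a j k = Lmat b j k

/-- The unit symbol. -/
def oneSymbol : Symb := fun _ _ => 1

/-- `+` symbols: the star-Laurent matrix is lower triangular. -/
def isPlus (a : Symb) : Prop := ∀ j k : ℤ, j < k → Lmat a j k = 0

/-- `-` symbols: the star-Laurent matrix is upper triangular. -/
def isMinus (a : Symb) : Prop := ∀ j k : ℤ, k < j → Lmat a j k = 0

/-- Matrix element of the star-Toeplitz operator (meaningful for `j, k ≥ 1`). -/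
def Tmat (a : Symb) (j k : ℕ) : ℂ := Lmat a (j : ℤ) (k : ℤ)

/-- Matrix element of the star-Hankel operator (meaningful for `j, k ≥ 1`). -/
def Hmat (a : Symb) (j k : ℕ) : ℂ := fCoef (a ((j : ℤ) - k + 1)) ((j : ℤ) + k - 1)

/-- The `n × n` star-Toeplitz matrix. -/
def Tn (a : Symb) (n : ℕ) : Matrix (Fin n) (Fin n) ℂ :=
  Matrix.of fun j k : Fin n => Lmat a ((j : ℤ) + 1) ((k : ℤ) + 1)

/-- The reflected symbol `(a^∼)_x(z) = a_{1-x}(z⁻¹)`. -/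
def reflect (a : Symb) : Symb := fun x z => a (2 - x) z⁻¹

/-- Pointwise difference of symbols. -/
def subSym (a b : Symb) : Symb := fun x z => a x z - b x z

/-- Pointwise scalar multiple of a symbol. -/
def smulSym (c : ℂ) (a : Symb) : Symb := fun x z => c * a x z

/-- Star powers of a symbol. -/
def starPow (a : Symb) : ℕ → Symb
  | 0 => oneSymbol
  | n + 1 => starProd a (starPow a n)

/-- The star exponential of a symbol. -/
def expStar (a : Symb) : Symb := fun x z =>
  ∑' n : ℕ, ((Nat.factorial n : ℂ))⁻¹ * starPow a n x z

/-- `b` is a star logarithm in `V` of `a`. -/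
def IsStarLog (b a : Symb) : Prop := memV b ∧ symbolEquiv (expStar b) a

/-- `b` is a star inverse of `a`. -/
def IsStarInv (a b : Symb) : Prop :=
  symbolEquiv (starProd a b) oneSymbol ∧ symbolEquiv (starProd b a) oneSymbol

/-- The symbol `(x, z) ↦ z^n`. -/
def zpowSym (n : ℤ) : Symb := fun _ z => z ^ n

/-- The Moyal bracket `{c, d}_M = -i (c ⋆ d - d ⋆ c)`. -/
def moyalBracket (c d : Symb) : Symb := fun x z =>
  -Complex.I * (starProd c d x z - starProd d c x z)

/-- `a` has zero star winding number: it admits left and right Wiener-Hopf star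
factorizations with `±` factors in `V` whose star logarithms exist in `V`. -/
def HasZeroStarWinding (a : Symb) : Prop :=
  ∃ aLp aLm aRm aRp bLp bLm bRm bRp : Symb,
    isPlus aLp ∧ isMinus aLm ∧ isMinus aRm ∧ isPlus aRp ∧
    memV aLp ∧ memV aLm ∧ memV aRm ∧ memV aRp ∧
    IsStarLog bLp aLp ∧ IsStarLog bLm aLm ∧ IsStarLog bRm aRm ∧ IsStarLog bRp aRp ∧
    symbolEquiv a (starProd aLp aLm) ∧ symbolEquiv a (starProd aRm aRp)

/-- Operator norm of an infinite matrix, as the least constant `C` with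
`‖A v‖₂ ≤ C ‖v‖₂` for finitely supported `v`. -/
def matOpNorm {ι κ : Type*} (A : ι → κ → ℂ) : ℝ :=
  sInf {C : ℝ | 0 ≤ C ∧ ∀ v : κ →₀ ℂ,
    ∑' j : ι, ‖∑ k ∈ v.support, A j k * v k‖ ^ 2 ≤ C ^ 2 * ∑ k ∈ v.support, ‖v k‖ ^ 2}

/-- The matrix of `P̃_n A P̃_n`. -/
def PAP (n : ℕ) (A : ℤ → ℤ → ℂ) : ℤ → ℤ → ℂ := fun j k =>
  if |j| ≤ (n : ℤ) ∧ |k| ≤ (n : ℤ) then A j k else 0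

/-- The matrix of `P̃_n A Q̃_m`. -/
def PAQ (n m : ℕ) (A : ℤ → ℤ → ℂ) : ℤ → ℤ → ℂ := fun j k =>
  if |j| ≤ (n : ℤ) ∧ ¬ |k| ≤ (m : ℤ) then A j k else 0

/-- The matrix of `Q̃_m A P̃_n`. -/
def QAP (m n : ℕ) (A : ℤ → ℤ → ℂ) : ℤ → ℤ → ℂ := fun j k =>
  if ¬ |j| ≤ (m : ℤ) ∧ |k| ≤ (n : ℤ) then A j k else 0

/-- The localization norm `‖a‖_loc = ∑_{n≥0} 2^{-(n+1)} ‖P̃_n L(a) P̃_n‖`. -/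
def locNorm (a : Symb) : ℝ :=
  ∑' n : ℕ, ((2 : ℝ))⁻¹ ^ (n + 1) * matOpNorm (PAP n (Lmat a))


/-- The operator exponential `e^T` applied to a symbol, via the power series. -/
def opExp (T : Symb → Symb) : Symb → Symb := fun d x z =>
  ∑' n : ℕ, ((Nat.factorial n : ℂ))⁻¹ * (T^[n] d) x z

/-- Taylor coefficients of `ψ₁(x) = 2x (x log x + 1 - x)/(x-1)²` around `x = 1`. -/
def psi1Coef : ℕ → ℂ := fun j =>
  if j = 0 then 1 else 4 * (-1) ^ (j + 1) / ((j : ℂ) * ((j : ℂ) + 1) * ((j : ℂ) + 2))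

/-- `ψ₁` of an operator, applied to a symbol, via the power series around the identity. -/
def opPsi1 (T : Symb → Symb) : Symb → Symb := fun d x z =>
  ∑' n : ℕ, psi1Coef n * ((fun e : Symb => fun x' z' => T e x' z' - e x' z')^[n] d) x z

/-- The operator `α • 𝓜(c)`, where `𝓜(c) d = {c,d}_M` is the Moyal adjoint action. -/
def MopS (c : Symb) (α : ℂ) : Symb → Symb := fun e => smulSym α (moyalBracket c e)

/-- `Φ_BCH(c,d)` of the paper. -/
def PhiBCH (c d : Symb) : Symb := fun x z =>
  (∫ t in (0:ℝ)..(1:ℝ), ∫ s in (0:ℝ)..(1:ℝ),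
      (opExp (MopS c (-Complex.I * (s : ℂ)))
        ((opPsi1 (fun e => opExp (MopS c Complex.I) (opExp (MopS d (Complex.I * (t : ℂ))) e))) d)) x z)
  - (∫ t in (0:ℝ)..(1:ℝ), ∫ s in (0:ℝ)..t,
      (opExp (MopS c (Complex.I * (s : ℂ)))
        (opExp (MopS d Complex.I)
          ((opPsi1 (fun e => opExp (MopS d (-Complex.I)) (opExp (MopS c (-Complex.I * (t : ℂ))) e))) c))) x z)

/-- The pair `(c,d)` belongs to `S_Φ`. -/
def memSPhi (c d : Symb) : Prop :=
  ∃ (F : ℕ → Symb) (ε : ℝ), 0 < ε ∧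
    (∀ ν : ℝ, |ν - 1| < ε → Summable (fun n : ℕ => matOpNorm (Lmat (F n)) * |ν| ^ n)) ∧
    (∀ ν : ℝ, |ν - 1| < ε → memV (fun x z => ∑' n : ℕ, (ν : ℂ) ^ n * F n x z)) ∧
    (∀ ν : ℝ, |ν - 1| < ε →
      symbolEquiv (PhiBCH (smulSym (ν : ℂ) c) (smulSym (ν : ℂ) d))
        (fun x z => ∑' n : ℕ, (ν : ℂ) ^ (n + 1) * F n x z))

/-- A sequence of symbols regularizes `a` (Definition 3.13). -/
def Regularizes (A : ℕ → Symb) (a : Symb) : Prop :=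
  Filter.Tendsto (fun k => locNorm (subSym (A k) a)) Filter.atTop (nhds 0) ∧
  ∃ (aLp aLm aRm aRp bLp bLm bRm bRp : ℕ → Symb) (ρ M : ℝ), ρ ∈ Set.Ioo (0:ℝ) 1 ∧
    (∀ k, isPlus (aLp k) ∧ isMinus (aLm k) ∧ isMinus (aRm k) ∧ isPlus (aRp k)) ∧
    (∀ k, memV (aLp k) ∧ memV (aLm k) ∧ memV (aRm k) ∧ memV (aRp k)) ∧
    (∀ k, symbolEquiv (A k) (starProd (aLp k) (aLm k)) ∧
          symbolEquiv (A k) (starProd (aRm k) (aRp k))) ∧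
    (∀ k, symbolEquiv (expStar (bLp k)) (aLp k) ∧ symbolEquiv (expStar (bLm k)) (aLm k) ∧
          symbolEquiv (expStar (bRm k)) (aRm k) ∧ symbolEquiv (expStar (bRp k)) (aRp k)) ∧
    (∀ k, memVrho ρ (bLp k) ∧ memVrho ρ (bLm k) ∧ memVrho ρ (bRm k) ∧ memVrho ρ (bRp k)) ∧
    (∀ k, ∀ b : Symb, (b = bLp k ∨ b = bLm k ∨ b = bRm k ∨ b = bRp k) →
        ∀ (j : ℤ), ∀ z ∈ annulus ρ, ‖b j z‖ ≤ M) ∧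
    (∀ k, memSPhi (bLp k) (bLm k) ∧ memSPhi (bRm k) (bRp k)) ∧
    (∀ k, ∀ b : Symb, (b = bLp k ∨ b = bLm k ∨ b = bRm k ∨ b = bRp k) →
        Summable (fun jl : ℕ × ℕ => ‖Tmat b (jl.1 + 1) (jl.2 + 1)‖))

/-- `a` admits a regularisation. -/
def IsRegularizable (a : Symb) : Prop := ∃ A : ℕ → Symb, Regularizes A a

/-- The boundary term `E_x^{R/L}` of the strong Szegő-type theorem; `k = 2x`. -/
def Eterm (bp bm dm dp : Symb) (k : ℤ) : ℂ :=
  (1/2 : ℂ) * ∑' m : ℕ, ∑ j ∈ Finset.Icc 1 (m + 1),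
    (fCoef (bp (k + 2*(j:ℤ) - ((m:ℤ) + 2))) ((m:ℤ) + 1) *
        fCoef (dm (k + 2*(j:ℤ) - ((m:ℤ) + 2))) (-((m:ℤ) + 1)) +
      fCoef (dp (k + 2*(j:ℤ) - ((m:ℤ) + 2))) ((m:ℤ) + 1) *
        fCoef (bm (k + 2*(j:ℤ) - ((m:ℤ) + 2))) (-((m:ℤ) + 1)))

/-- `T(cinv)` is a two-sided (matrix) inverse of `T(c)` on `ℓ²(ℕ)`. -/
def TmatTwoSidedInverse (c cinv : Symb) : Prop :=
  ∀ j k : ℕ, 1 ≤ j → 1 ≤ k →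
    (∑' l : ℕ, Tmat c j (l + 1) * Tmat cinv (l + 1) k) = (if j = k then 1 else 0) ∧
    (∑' l : ℕ, Tmat cinv j (l + 1) * Tmat c (l + 1) k) = (if j = k then 1 else 0)
-- ### block D : functions on ℝ × (strip) representing symbols

/-- The horizontal strip `log ρ < Im z < -log ρ` in the complex plane. -/
def strip (ρ : ℝ) : Set ℂ := {z : ℂ | Real.log ρ < z.im ∧ z.im < -Real.log ρ}

/-- `a = [F]`: the function `F` on `ℝ × (ℝ/2πℤ)` represents the symbol `a`. -/
def RepBy (a : Symb) (F : ℝ → ℂ → ℂ) : Prop :=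
  ∀ k m : ℤ, (k + m) % 2 = 0 →
    fCoef (a k) m = (2 * (Real.pi : ℂ))⁻¹ *
      ∫ p in (-Real.pi)..Real.pi, F ((k : ℝ) / 2) (p : ℂ) * Complex.exp (-(Complex.I * (m : ℂ) * (p : ℂ)))

/-- Partial derivative in the first (real) argument. -/
def D1 (F : ℝ → ℂ → ℂ) : ℝ → ℂ → ℂ := fun x p => deriv (fun y => F y p) x

/-- Partial derivative in the second (complex) argument. -/
def D2 (F : ℝ → ℂ → ℂ) : ℝ → ℂ → ℂ := fun x p => deriv (fun q => F x q) p

/-- The `+` part `g⁺` of a function on `ℝ × (ℝ/2πℤ)`. -/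
def plusPart (F : ℝ → ℂ → ℂ) : ℝ → ℂ → ℂ := fun y p =>
  ∑' n : ℕ, Complex.exp (Complex.I * (n : ℂ) * p) *
    ((2 * (Real.pi : ℂ))⁻¹ * ∫ q in (-Real.pi)..Real.pi,
      F y (q : ℂ) * Complex.exp (-(Complex.I * (n : ℂ) * (q : ℂ))))

/-- The `-` part `g⁻` of a function on `ℝ × (ℝ/2πℤ)`. -/
def minusPart (F : ℝ → ℂ → ℂ) : ℝ → ℂ → ℂ := fun y p =>
  ∑' n : ℕ, Complex.exp (-(Complex.I * ((n : ℂ) + 1) * p)) *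
    ((2 * (Real.pi : ℂ))⁻¹ * ∫ q in (-Real.pi)..Real.pi,
      F y (q : ℂ) * Complex.exp (Complex.I * ((n : ℂ) + 1) * (q : ℂ)))

/-- Poisson bracket `{u,v} = ∂₁u ∂₂v - ∂₁v ∂₂u`. -/
def pois (u v : ℝ → ℂ → ℂ) : ℝ → ℂ → ℂ := fun y p =>
  D1 u y p * D2 v y p - D1 v y p * D2 u y p

/-- Truncation of the Moyal product to the first `k` orders of derivatives. -/
def moyalTrunc (k : ℕ) (ν : ℝ) (f g : ℝ → ℂ → ℂ) : ℝ → ℂ → ℂ := fun y p =>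
  ∑ j ∈ Finset.range k, ((Nat.factorial j : ℂ))⁻¹ * (Complex.I * (ν : ℂ) / 2) ^ j *
    ∑ i ∈ Finset.range (j + 1), (j.choose i : ℂ) * (-1) ^ (j - i) *
      (D1^[j - i] (D2^[i] f)) y p * (D1^[i] (D2^[j - i] g)) y p

/-- The second-order expansion of `log f₊ᴴ(ν) + log f₋ᴴ(ν)` (Corollary 4.5), `σ = σ_H`. -/
def whExp2 (σ : ℝ) (ν : ℝ) (g : ℝ → ℂ → ℂ) : ℝ → ℂ → ℂ := fun y p =>
  g y p + (Complex.I / 2) * (σ : ℂ) * (ν : ℂ) * pois (minusPart g) (plusPart g) y p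
    + ((ν : ℂ) ^ 2 / 8) *
      (2 * pois (plusPart g) (minusPart (pois (minusPart g) (plusPart g))) y p
        - 2 * pois (minusPart g) (plusPart (pois (minusPart g) (plusPart g))) y p
        - D2 (minusPart g) y p * pois (minusPart g) (D1 (plusPart g)) y p
        + D1 (minusPart g) y p * pois (minusPart g) (D2 (plusPart g)) y p
        - D1 (plusPart g) y p * pois (D2 (minusPart g)) (plusPart g) y p
        + D2 (plusPart g) y p * pois (D1 (minusPart g)) (plusPart g) y p
        - pois (D2 (minusPart g)) (D1 (plusPart g)) y p
        + pois (D1 (minusPart g)) (D2 (plusPart g)) y p)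

/-- The bidifferential operator `((∂_{φ₁}∂_{φ₂'} - ∂_{φ₂}∂_{φ₁'})/2)^N F(φ') R(φ)|_{φ'=φ}`. -/
def bidiff (N : ℕ) (F R : ℝ → ℂ → ℂ) : ℝ → ℂ → ℂ := fun y p =>
  ((1 : ℂ) / 2) ^ N * ∑ i ∈ Finset.range (N + 1), (N.choose i : ℂ) * (-1) ^ (N - i) *
    (D1^[N - i] (D2^[i] F)) y p * (D2^[N - i] (D1^[i] R)) y p

/-- Auxiliary family for the recursive definition of `R_m^{(ζ)}[f]`. -/
def RresAux (f : ℝ → ℂ → ℂ) (ζ : ℂ) : ℕ → ℕ → ℝ → ℂ → ℂ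
  | 0 => fun _ => fun y p => (ζ - f y p)⁻¹
  | m + 1 => fun n =>
      if n ≤ m then RresAux f ζ m n
      else fun y p => (ζ - f y p)⁻¹ *
        ∑ j ∈ Finset.range (m + 1),
          ((Nat.choose (2 * (m + 1)) (2 * j) : ℂ)) * (-1) ^ (m + 1 - j) *
            bidiff (2 * (m + 1 - j)) f (RresAux f ζ m j) y p

/-- The coefficients `R_m^{(ζ)}[f]` of the asymptotic expansion of the star resolvent. -/
def Rres (f : ℝ → ℂ → ℂ) (ζ : ℂ) (m : ℕ) : ℝ → ℂ → ℂ := RresAux f ζ m m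

/-- `E(c) = ∑_{k≥1} k (log c)_k (log c)_{-k}`. -/
def Efun (c : ℂ → ℂ) : ℂ :=
  ∑' k : ℕ, ((k : ℂ) + 1) * fCoef (fun z => Complex.log (c z)) ((k : ℤ) + 1) *
    fCoef (fun z => Complex.log (c z)) (-((k : ℤ) + 1))

/-!
Cauchy's estimate on the annulus of analyticity bounds the Fourier coefficients of every `a ∈ V`
by `‖(a_x)_m‖ ≤ C r^{|m|}` with `r < 1`, uniformly in `x`. For such symbols the double series
defining `a ⋆ b` converges absolutely and can be integrated term by term, which gives
`L(a ⋆ b)_{jk} = ∑_{l ∈ ℤ} L(a)_{jl} L(b)_{lk}`. When `j ≥ 1` and `L(a)` is upper triangular the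
terms with `l ≤ 0` vanish, so only the Toeplitz part of the sum survives; symmetrically for a
lower triangular right factor and `k ≥ 1`. The triple product is `a₋ ⋆ (b ⋆ c₊)`, and `b ⋆ c₊`
again has exponentially decaying coefficients.
-/

theorem integral_exp_int_mul_I (t : ℤ) :
    ∫ p in (-Real.pi)..Real.pi, Complex.exp (Complex.I * t * p) =
      if t = 0 then (2 * Real.pi : ℂ) else 0 := by
  split_ifs with ht
  · simp [ht, two_mul]
  have hc : Complex.I * t ≠ 0 := mul_ne_zero Complex.I_ne_zero (by exact_mod_cast ht)
  rw [integral_exp_mul_complex hc, div_eq_zero_iff, sub_eq_zero]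
  left
  rw [show Complex.I * t * ((-Real.pi : ℝ) : ℂ) =
      Complex.I * t * Real.pi - t * (2 * Real.pi * Complex.I) by push_cast; ring,
    Complex.exp_sub, Complex.exp_int_mul_two_pi_mul_I, div_one]

theorem fCoef_tsum_zpow_mul {ι : Type*} [Countable ι] {c : ι → ℂ}
    (hc : Summable fun i => ‖c i‖) (N : ι → ℤ) (s : ℤ) :
    fCoef (fun z => ∑' i, z ^ N i * c i) s = ∑' i, if N i = s then c i else 0 := by
  set F : ι → ℝ → ℂ := fun i p => c i * Complex.exp (Complex.I * (N i - s : ℤ) * p)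
  have hF : ∀ i p, ‖F i p‖ = ‖c i‖ := fun i p => by
    simp [F, Complex.norm_exp]
  have hexpand : ∀ p : ℝ, (∑' i, Complex.exp (Complex.I * p) ^ N i * c i) *
      Complex.exp (-(Complex.I * s * p)) = ∑' i, F i p := fun p => by
    rw [← tsum_mul_right]
    refine tsum_congr fun i => ?_
    rw [← Complex.exp_int_mul, mul_right_comm, mul_comm, ← Complex.exp_add]
    simp only [F]
    congr 2
    push_cast
    ring
  have hsum : HasSum (fun i => ∫ p in (-Real.pi)..Real.pi, F i p)
      (∫ p in (-Real.pi)..Real.pi, ∑' i, F i p) :=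
    intervalIntegral.hasSum_integral_of_dominated_convergence (fun i _ => ‖c i‖)
      (fun i => (by fun_prop : Continuous (F i)).aestronglyMeasurable)
      (fun i => ae_of_all _ fun p _ => (hF i p).le) (ae_of_all _ fun _ _ => hc)
      intervalIntegrable_const
      (ae_of_all _ fun p _ => (Summable.of_norm (by simpa only [hF] using hc)).hasSum)
  have hterm : ∀ i, (2 * (Real.pi : ℂ))⁻¹ * ∫ p in (-Real.pi)..Real.pi, F i p =
      if N i = s then c i else 0 := fun i => by
    rw [intervalIntegral.integral_const_mul, integral_exp_int_mul_I]
    simp only [sub_eq_zero]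
    split_ifs
    · field_simp
    · simp
  rw [fCoef, intervalIntegral.integral_congr fun p _ => hexpand p, ← hsum.tsum_eq,
    ← tsum_mul_left]
  exact tsum_congr hterm

theorem circleIntegral_mul_zpow_neg_sub_one (f : ℂ → ℂ) (m : ℤ) {R : ℝ} (hR : 0 < R) :
    (∮ z in C(0, R), f z * z ^ (-m - 1)) =
      Complex.I * (R : ℂ) ^ (-m) * ∫ p in (-Real.pi)..Real.pi,
        f (R * Complex.exp (Complex.I * p)) * Complex.exp (-(Complex.I * m * p)) := by
  have hper : Function.Periodic (fun θ : ℝ => deriv (circleMap 0 R) θ •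
      (f (circleMap 0 R θ) * circleMap 0 R θ ^ (-m - 1))) (2 * Real.pi) := fun θ => by
    simp only [deriv_circleMap, periodic_circleMap 0 R θ]
  have hshift := hper.intervalIntegral_add_eq 0 (-Real.pi)
  rw [zero_add, show -Real.pi + 2 * Real.pi = Real.pi by ring] at hshift
  rw [circleIntegral, hshift, ← intervalIntegral.integral_const_mul]
  refine intervalIntegral.integral_congr fun θ _ => ?_
  have hθ : circleMap 0 R θ ≠ 0 := circleMap_ne_center hR.ne'
  simp only [deriv_circleMap, smul_eq_mul]
  rw [zpow_sub_one₀ hθ]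
  field_simp
  rw [circleMap_zero, mul_zpow, ← Complex.exp_int_mul, mul_comm (θ : ℂ) Complex.I]
  push_cast
  ring_nf

theorem closedBall_diff_ball_subset_annulus {ρ r R : ℝ} (hr : ρ < r) (hR : R < ρ⁻¹) :
    Metric.closedBall (0 : ℂ) R \ Metric.ball 0 r ⊆ annulus ρ := by
  rintro z ⟨hzR, hzr⟩
  rw [Metric.mem_closedBall, dist_zero_right] at hzR
  rw [Metric.mem_ball, dist_zero_right, not_lt] at hzr
  exact ⟨hr.trans_le hzr, hzR.trans_lt hR⟩

theorem ne_zero_of_mem_annulus {ρ : ℝ} (hρ : 0 ≤ ρ) {z : ℂ} (hz : z ∈ annulus ρ) : z ≠ 0 :=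
  norm_pos_iff.mp (hρ.trans_lt hz.1)

theorem fCoef_eq_radius_integral {f : ℂ → ℂ} {ρ R : ℝ} (hρ0 : 0 < ρ) (hρ1 : ρ < 1)
    (hf : AnalyticOnNhd ℂ f (annulus ρ)) (hR1 : ρ < R) (hR2 : R < ρ⁻¹) (m : ℤ) :
    fCoef f m = (2 * (Real.pi : ℂ))⁻¹ * ((R : ℂ) ^ (-m) * ∫ p in (-Real.pi)..Real.pi,
      f (R * Complex.exp (Complex.I * p)) * Complex.exp (-(Complex.I * m * p))) := by
  set g : ℂ → ℂ := fun z => f z * z ^ (-m - 1)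
  have hg : ∀ z ∈ annulus ρ, DifferentiableAt ℂ g z := fun z hz =>
    (hf z hz).differentiableAt.mul
      (differentiableAt_zpow.mpr (Or.inl (ne_zero_of_mem_annulus hρ0.le hz)))
  have hradius : ∀ {r r' : ℝ}, 0 < r → r ≤ r' → ρ < r → r' < ρ⁻¹ →
      (∮ z in C(0, r'), g z) = ∮ z in C(0, r), g z := fun hr0 hrr' hr hr' => by
    have hsub := closedBall_diff_ball_subset_annulus hr hr'
    refine Complex.circleIntegral_eq_of_differentiable_on_annulus_off_countable hr0 hrr'
      Set.countable_empty (fun z hz => (hg z (hsub hz)).continuousAt.continuousWithinAt)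
      fun z hz => hg z (hsub ?_)
    exact Set.sdiff_subset_sdiff Metric.ball_subset_closedBall Metric.ball_subset_closedBall hz.1
  have h1ρ : 1 < ρ⁻¹ := (one_lt_inv₀ hρ0).mpr hρ1
  have hR0 : 0 < R := hρ0.trans hR1
  have hcircle : (∮ z in C(0, 1), g z) = ∮ z in C(0, R), g z := by
    rcases le_total R 1 with h | h
    · exact hradius hR0 h hR1 h1ρ
    · exact (hradius one_pos h hρ1 hR2).symm
  rw [circleIntegral_mul_zpow_neg_sub_one f m one_pos,
    circleIntegral_mul_zpow_neg_sub_one f m hR0] at hcircle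
  simp only [Complex.ofReal_one, one_zpow, mul_one, one_mul] at hcircle
  rw [fCoef, mul_left_cancel₀ Complex.I_ne_zero (hcircle.trans (mul_assoc _ _ _))]

theorem norm_fCoef_le_mul_zpow {f : ℂ → ℂ} {ρ R M : ℝ} (hρ0 : 0 < ρ) (hρ1 : ρ < 1)
    (hf : AnalyticOnNhd ℂ f (annulus ρ)) (hM : ∀ z ∈ annulus ρ, ‖f z‖ ≤ M)
    (hR1 : ρ < R) (hR2 : R < ρ⁻¹) (m : ℤ) :
    ‖fCoef f m‖ ≤ M * R ^ (-m) := by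
  have hR0 : 0 < R := hρ0.trans hR1
  have hπ := Real.pi_pos
  have hint : ‖∫ p in (-Real.pi)..Real.pi,
      f (R * Complex.exp (Complex.I * p)) * Complex.exp (-(Complex.I * m * p))‖ ≤
        M * (2 * Real.pi) := by
    calc _ ≤ M * |Real.pi - -Real.pi| :=
          intervalIntegral.norm_integral_le_of_norm_le_const fun p _ => ?_
      _ = M * (2 * Real.pi) := by rw [abs_of_pos (by linarith)]; ring
    have hnorm : ‖(R : ℂ) * Complex.exp (Complex.I * p)‖ = R := by
      simp [Complex.norm_exp, hR0.le]
    rw [norm_mul, Complex.norm_exp]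
    simpa using hM _ ⟨by rw [hnorm]; exact hR1, by rw [hnorm]; exact hR2⟩
  rw [fCoef_eq_radius_integral hρ0 hρ1 hf hR1 hR2, norm_mul, norm_mul, norm_zpow,
    Complex.norm_real, Real.norm_of_nonneg hR0.le]
  have h2π : ‖(2 * (Real.pi : ℂ))⁻¹‖ = (2 * Real.pi)⁻¹ := by simp [abs_of_pos hπ]
  calc _ ≤ (2 * Real.pi)⁻¹ * (R ^ (-m) * (M * (2 * Real.pi))) := by rw [h2π]; gcongr
    _ = M * R ^ (-m) := by field_simp

theorem norm_fCoef_le_mul_pow_natAbs {f : ℂ → ℂ} {ρ r M : ℝ} (hρ0 : 0 < ρ) (hρr : ρ < r)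
    (hr1 : r < 1) (hf : AnalyticOnNhd ℂ f (annulus ρ)) (hM : ∀ z ∈ annulus ρ, ‖f z‖ ≤ M)
    (m : ℤ) : ‖fCoef f m‖ ≤ M * r ^ m.natAbs := by
  have hr0 : 0 < r := hρ0.trans hρr
  have hρ1 : ρ < 1 := hρr.trans hr1
  have h1ρ : 1 < ρ⁻¹ := (one_lt_inv₀ hρ0).mpr hρ1
  -- the outer circle of radius `r⁻¹` for `m ≥ 0`, the inner one of radius `r` for `m < 0`
  obtain ⟨R, hR1, hR2, hRm⟩ : ∃ R : ℝ, ρ < R ∧ R < ρ⁻¹ ∧ R ^ (-m) = r ^ m.natAbs := by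
    rcases le_or_gt 0 m with hm | hm
    · refine ⟨r⁻¹, hρ1.trans ((one_lt_inv₀ hr0).mpr hr1), (inv_lt_inv₀ hr0 hρ0).mpr hρr, ?_⟩
      rw [← zpow_natCast, Int.natAbs_of_nonneg hm, inv_zpow', neg_neg]
    · refine ⟨r, hρr, hr1.trans h1ρ, ?_⟩
      rw [← zpow_natCast, ← Int.natAbs_neg, Int.natAbs_of_nonneg (by omega)]
  exact (norm_fCoef_le_mul_zpow hρ0 hρ1 hf hM hR1 hR2 m).trans_eq (by rw [hRm])

def HasUniformCoeffDecay (a : Symb) (C r : ℝ) : Prop :=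
  ∀ k m : ℤ, ‖fCoef (a k) m‖ ≤ C * r ^ m.natAbs

theorem memV.exists_hasUniformCoeffDecay {a : Symb} (ha : memV a) :
    ∃ ρ ∈ Set.Ioo (0 : ℝ) 1, ∃ C, ∀ r, ρ < r → r < 1 → HasUniformCoeffDecay a C r := by
  obtain ⟨ρ, hρ, han, M, hM⟩ := ha
  exact ⟨ρ, hρ, M, fun r hρr hr1 k =>
    norm_fCoef_le_mul_pow_natAbs hρ.1 hρr hr1 (han k) (hM k)⟩

theorem summable_pow_natAbs {r : ℝ} (hr0 : 0 ≤ r) (hr1 : r < 1) :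
    Summable fun n : ℤ => r ^ n.natAbs :=
  Summable.of_nat_of_neg (by simpa using summable_geometric_of_lt_one hr0 hr1)
    (by simpa using summable_geometric_of_lt_one hr0 hr1)

namespace HasUniformCoeffDecay

variable {a b : Symb} {Ca Cb r : ℝ}

theorem nonneg (ha : HasUniformCoeffDecay a Ca r) : 0 ≤ Ca := by
  simpa using (norm_nonneg _).trans (ha 0 0)

theorem summable_norm_starProd_coeff (hr0 : 0 ≤ r) (hr1 : r < 1)
    (ha : HasUniformCoeffDecay a Ca r) (hb : HasUniformCoeffDecay b Cb r) (x : ℤ) :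
    Summable fun mn : ℤ × ℤ => ‖fCoef (a (x + mn.1)) mn.2 * fCoef (b (x - mn.2)) mn.1‖ := by
  have hgeo := summable_pow_natAbs hr0 hr1
  refine Summable.of_nonneg_of_le (fun _ => norm_nonneg _) (fun mn => ?_)
    (Summable.mul_of_nonneg (hgeo.mul_left Cb) (hgeo.mul_left Ca)
      (fun _ => mul_nonneg hb.nonneg (by positivity))
      (fun _ => mul_nonneg ha.nonneg (by positivity)))
  rw [norm_mul, mul_comm]
  exact mul_le_mul (hb _ _) (ha _ _) (norm_nonneg _) (mul_nonneg hb.nonneg (by positivity))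

theorem fCoef_starProd (hr0 : 0 ≤ r) (hr1 : r < 1)
    (ha : HasUniformCoeffDecay a Ca r) (hb : HasUniformCoeffDecay b Cb r) (x s : ℤ) :
    fCoef (starProd a b x) s =
      ∑' n : ℤ, fCoef (a (x + (s - n))) n * fCoef (b (x - n)) (s - n) := by
  have hseries : starProd a b x = fun z => ∑' mn : ℤ × ℤ,
      z ^ (mn.1 + mn.2) * (fCoef (a (x + mn.1)) mn.2 * fCoef (b (x - mn.2)) mn.1) := by
    funext z
    simp only [_root_.starProd, mul_assoc]
  rw [hseries, fCoef_tsum_zpow_mul (summable_norm_starProd_coeff hr0 hr1 ha hb x)]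
  -- only the antidiagonal `m + n = s`, parametrised by `n ↦ (s - n, n)`, contributes
  have hinj : Function.Injective fun n : ℤ => (s - n, n) := fun n n' h => (Prod.ext_iff.mp h).2
  rw [← hinj.tsum_eq]
  · exact tsum_congr fun n => by simp
  · intro mn hmn
    refine ⟨mn.2, Prod.ext ?_ rfl⟩
    by_contra h
    exact hmn (if_neg (by dsimp only at h ⊢; omega))

theorem Lmat_starProd (hr0 : 0 ≤ r) (hr1 : r < 1)
    (ha : HasUniformCoeffDecay a Ca r) (hb : HasUniformCoeffDecay b Cb r) (j k : ℤ) :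
    Lmat (starProd a b) j k = ∑' l : ℤ, Lmat a j l * Lmat b l k := by
  rw [Lmat, fCoef_starProd hr0 hr1 ha hb, ← (Equiv.subLeft j).tsum_eq]
  refine tsum_congr fun l => ?_
  rw [Equiv.subLeft_apply, Lmat, Lmat, show j + k + (j - k - (j - l)) = j + l by ring,
    show j + k - (j - l) = l + k by ring, show j - k - (j - l) = l - k by ring]

theorem starProd (hr0 : 0 ≤ r) (hr1 : r < 1)
    (ha : HasUniformCoeffDecay a Ca (r * r)) (hb : HasUniformCoeffDecay b Cb (r * r)) :
    HasUniformCoeffDecay (_root_.starProd a b) (Ca * Cb * ∑' n : ℤ, r ^ n.natAbs) r := by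
  intro x s
  have hgeo := summable_pow_natAbs hr0 hr1
  have hterm : ∀ n : ℤ, ‖fCoef (a (x + (s - n))) n * fCoef (b (x - n)) (s - n)‖ ≤
      Ca * Cb * r ^ s.natAbs * r ^ n.natAbs := fun n => by
    have hexp : s.natAbs + n.natAbs ≤ 2 * n.natAbs + 2 * (s - n).natAbs := by
      have := Int.natAbs_add_le n (s - n)
      rw [add_sub_cancel] at this
      omega
    calc _ ≤ Ca * (r * r) ^ n.natAbs * (Cb * (r * r) ^ (s - n).natAbs) := by
          rw [norm_mul]
          exact mul_le_mul (ha _ _) (hb _ _) (norm_nonneg _) (mul_nonneg ha.nonneg (by positivity))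
      _ = Ca * Cb * r ^ (2 * n.natAbs + 2 * (s - n).natAbs) := by ring
      _ ≤ Ca * Cb * r ^ (s.natAbs + n.natAbs) :=
          mul_le_mul_of_nonneg_left (pow_le_pow_of_le_one hr0 hr1.le hexp)
            (mul_nonneg ha.nonneg hb.nonneg)
      _ = Ca * Cb * r ^ s.natAbs * r ^ n.natAbs := by ring
  have hsum : Summable fun n : ℤ => ‖fCoef (a (x + (s - n))) n * fCoef (b (x - n)) (s - n)‖ :=
    Summable.of_nonneg_of_le (fun _ => norm_nonneg _) hterm (hgeo.mul_left _)
  rw [fCoef_starProd (mul_nonneg hr0 hr0) (by nlinarith) ha hb]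
  calc _ ≤ ∑' n : ℤ, Ca * Cb * r ^ s.natAbs * r ^ n.natAbs :=
        (norm_tsum_le_tsum_norm hsum).trans (hsum.tsum_le_tsum hterm (hgeo.mul_left _))
    _ = _ := by rw [tsum_mul_left]; ring

end HasUniformCoeffDecay

theorem tsum_int_eq_tsum_nat_succ {M : Type*} [AddCommMonoid M] [TopologicalSpace M]
    {f : ℤ → M} (hf : ∀ l ≤ 0, f l = 0) : ∑' l : ℤ, f l = ∑' l : ℕ, f (l + 1) := by
  refine ((Function.Injective.tsum_eq (g := fun l : ℕ => (l : ℤ) + 1)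
    (fun l l' h => by simpa using h)) fun l hl => ?_).symm
  have : 0 < l := by
    by_contra h
    exact hl (hf l (by omega))
  exact ⟨(l - 1).toNat, by simp only; omega⟩

section Toeplitz

variable {a b : Symb} {Ca Cb r : ℝ}

theorem Tmat_starProd_of_isMinus (hr0 : 0 ≤ r) (hr1 : r < 1) (hminus : isMinus a)
    (ha : HasUniformCoeffDecay a Ca r) (hb : HasUniformCoeffDecay b Cb r)
    {j : ℕ} (hj : 1 ≤ j) (k : ℕ) :
    Tmat (starProd a b) j k = ∑' l : ℕ, Tmat a j (l + 1) * Tmat b (l + 1) k := by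
  rw [Tmat, ha.Lmat_starProd hr0 hr1 hb,
    tsum_int_eq_tsum_nat_succ fun l hl => by rw [hminus _ _ (by omega), zero_mul]]
  simp only [Tmat, Nat.cast_succ]

theorem Tmat_starProd_of_isPlus (hr0 : 0 ≤ r) (hr1 : r < 1) (hplus : isPlus b)
    (ha : HasUniformCoeffDecay a Ca r) (hb : HasUniformCoeffDecay b Cb r)
    (j : ℕ) {k : ℕ} (hk : 1 ≤ k) :
    Tmat (starProd a b) j k = ∑' l : ℕ, Tmat a j (l + 1) * Tmat b (l + 1) k := by
  rw [Tmat, ha.Lmat_starProd hr0 hr1 hb,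
    tsum_int_eq_tsum_nat_succ fun l hl => by rw [hplus _ _ (by omega), mul_zero]]
  simp only [Tmat, Nat.cast_succ]

end Toeplitz

theorem exists_lt_mul_self_lt_one {ρ : ℝ} (hρ0 : 0 ≤ ρ) (hρ1 : ρ < 1) :
    ∃ r : ℝ, 0 < r ∧ ρ < r * r ∧ r < 1 :=
  ⟨(1 + ρ) / 2, by positivity, by nlinarith [mul_pos (sub_pos.2 hρ1) (sub_pos.2 hρ1)],
    by linarith⟩

/-- `T(a₋ ⋆ b ⋆ c₊) = T(a₋) T(b) T(c₊)` for a `-` symbol `a₋`, a `+` symbol `c₊` and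
arbitrary `b ∈ V`, together with the two-factor special cases (Lemma 3.4 of the paper);
stated entrywise on `ℓ²(ℕ)`. -/
theorem star_toeplitz_minus_plus_factorization
    (am b cp : Symb) (ham : memV am) (hb : memV b) (hcp : memV cp)
    (hmin : isMinus am) (hplus : isPlus cp) :
    (∀ j k : ℕ, 1 ≤ j → 1 ≤ k →
      Tmat (starProd am (starProd b cp)) j k =
        ∑' l : ℕ, ∑' l' : ℕ, Tmat am j (l + 1) * Tmat b (l + 1) (l' + 1) * Tmat cp (l' + 1) k) ∧
    (∀ j k : ℕ, 1 ≤ j → 1 ≤ k →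
      Tmat (starProd am b) j k = ∑' l : ℕ, Tmat am j (l + 1) * Tmat b (l + 1) k) ∧
    (∀ j k : ℕ, 1 ≤ j → 1 ≤ k →
      Tmat (starProd b cp) j k = ∑' l : ℕ, Tmat b j (l + 1) * Tmat cp (l + 1) k) := by
  obtain ⟨ρ₁, hρ₁, C₁, ha⟩ := ham.exists_hasUniformCoeffDecay
  obtain ⟨ρ₂, hρ₂, C₂, hb⟩ := hb.exists_hasUniformCoeffDecay
  obtain ⟨ρ₃, hρ₃, C₃, hc⟩ := hcp.exists_hasUniformCoeffDecay
  obtain ⟨r, hr0, hρr, hr1⟩ := exists_lt_mul_self_lt_one (hρ₁.1.le.trans (le_max_left _ _))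
    (max_lt hρ₁.2 (max_lt hρ₂.2 hρ₃.2))
  obtain ⟨h₁, h₂, h₃⟩ : ρ₁ < r * r ∧ ρ₂ < r * r ∧ ρ₃ < r * r := by
    simpa only [max_lt_iff] using hρr
  have hrr : r * r < r := mul_lt_of_lt_one_left hr0 hr1
  have hA := ha r (h₁.trans hrr) hr1
  have hB := hb r (h₂.trans hrr) hr1
  have hC := hc r (h₃.trans hrr) hr1
  have hBC := (hb (r * r) h₂ (hrr.trans hr1)).starProd hr0.le hr1 (hc (r * r) h₃ (hrr.trans hr1))
  refine ⟨fun j k hj hk => ?_, fun j k hj _ => Tmat_starProd_of_isMinus hr0.le hr1 hmin hA hB hj k,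
    fun j k _ hk => Tmat_starProd_of_isPlus hr0.le hr1 hplus hB hC j hk⟩
  rw [Tmat_starProd_of_isMinus hr0.le hr1 hmin hA hBC hj]
  refine tsum_congr fun l => ?_
  rw [Tmat_starProd_of_isPlus hr0.le hr1 hplus hB hC _ hk, ← tsum_mul_left]
  simp only [mul_assoc]

end
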